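/- arXiv:2510.19726 — 2 statements merged into one kernel-verified Lean document; each statement's English description precedes it below -/
import Mathlib

section
/- The probability generating function of X ~ Hypergeometric(N,K,n), namely G(t) = Σ_k Pr[X=k] t^k, is a polynomial in t of degree min(n,K) all of whose roots are real and non-positive. -/
open Finset

/-- Binomial coefficient on integers, zero when `b < 0` or `b > a`. -/
def zchoose (a b : ℤ) : ℤ :=
  if 0 ≤ b ∧ b ≤ a then (a.toNat).choose b.toNat else 0

/-- Hypergeometric pmf `f(k; N, K, n) = C(K,k) C(N-K, n-k) / C(N,n)`. -/
noncomputable def hypPMF (N K n k : ℤ) : ℝ :=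
  ((zchoose K k * zchoose (N - K) (n - k) : ℤ) : ℝ) / ((zchoose N n : ℤ) : ℝ)

/-- Upper tail `Pr[X ≥ d]` for `X ~ Hypergeometric(N, K, n)`. -/
noncomputable def hypTail (N K n d : ℤ) : ℝ :=
  ∑' k : ℤ, if d ≤ k then hypPMF N K n k else 0

/-- Binary Kullback–Leibler divergence `D(x ‖ y)`. -/
noncomputable def klBer (x y : ℝ) : ℝ :=
  x * Real.log (x / y) + (1 - x) * Real.log ((1 - x) / (1 - y))

section HypProof
open Polynomial Set Finset


lemma exists_root_between (f : ℝ[X]) (hf : f ≠ 0) (a x y : ℝ) (hxy : x < y)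
    (hx : f.IsRoot x) (hy : f.IsRoot y) :
    ∃ c, x < c ∧ c < y ∧ (f.derivative + C a * f).IsRoot c ∧ ¬ f.IsRoot c := by
  set h : ℝ → ℝ := fun t => f.eval t * Real.exp (a * t) with hh
  set φ : ℝ → ℝ := fun t => (h t) ^ 2 with hφ
  have hcont : ContinuousOn φ (Icc x y) := by fun_prop
  obtain ⟨c, hcmem, hmax⟩ := isCompact_Icc.exists_isMaxOn (nonempty_Icc.2 hxy.le) hcont
  obtain ⟨t0, ht0, hft0⟩ : ∃ t0 ∈ Ioo x y, f.eval t0 ≠ 0 := by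
    by_contra hcon
    push_neg at hcon
    exact hf (f.eq_zero_of_infinite_isRoot ((Set.Ioo_infinite hxy).mono hcon))
  have hφt0 : 0 < φ t0 := by
    have : h t0 ≠ 0 := mul_ne_zero hft0 (Real.exp_ne_zero _)
    positivity
  have hφc : 0 < φ c := lt_of_lt_of_le hφt0 (hmax (mem_Icc_of_Ioo ht0))
  have hfc : f.eval c ≠ 0 := by
    intro h0
    rw [hφ, hh] at hφc; simp [h0] at hφc
  have hcx : x < c := hcmem.1.lt_of_ne' fun e => hfc (e ▸ hx)
  have hcy : c < y := hcmem.2.lt_of_ne fun e => hfc (e ▸ hy)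
  refine ⟨c, hcx, hcy, ?_, hfc⟩
  have hder : HasDerivAt h (f.derivative.eval c * Real.exp (a * c)
      + f.eval c * (Real.exp (a * c) * a)) c := by
    have h1 : HasDerivAt (fun t : ℝ => Real.exp (a * t)) (Real.exp (a * c) * a) c := by
      simpa using ((hasDerivAt_id c).const_mul a).exp
    exact ((f.hasDerivAt c).mul h1).congr_deriv (by ring)
  have hderφ : HasDerivAt φ (2 * h c * (f.derivative.eval c * Real.exp (a * c)
      + f.eval c * (Real.exp (a * c) * a))) c := by
    exact (hder.pow 2).congr_deriv (by rw [show (2:ℕ) - 1 = 1 from rfl, pow_one]; push_cast; ring)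
  have hloc : IsLocalMax φ c := hmax.isLocalMax (Icc_mem_nhds hcx hcy)
  have h0 := hloc.hasDerivAt_eq_zero hderφ
  have hexp := Real.exp_ne_zero (a * c)
  have hhc : (2 : ℝ) * h c ≠ 0 := by
    have : h c ≠ 0 := mul_ne_zero hfc hexp
    positivity
  have h2 : f.derivative.eval c * Real.exp (a * c) + f.eval c * (Real.exp (a * c) * a) = 0 :=
    by rcases mul_eq_zero.1 h0 with h' | h'
       · exact absurd h' hhc
       · exact h'
  have h3 : (f.derivative.eval c + a * f.eval c) * Real.exp (a * c) = 0 := by ring_nf; ring_nf at h2; linarith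
  have h4 : f.derivative.eval c + a * f.eval c = 0 := by
    rcases mul_eq_zero.1 h3 with h' | h'
    · exact h'
    · exact absurd h' hexp
  simp only [IsRoot, eval_add, eval_mul, eval_C]
  linarith



lemma rolle_finset (f : Polynomial ℝ) (hf : f ≠ 0) (a : ℝ) :
    ∀ j : ℕ, ∀ F : Finset ℝ, F.card = j + 1 → (∀ x ∈ F, f.IsRoot x) →
    ∃ T : Finset ℝ, T.card = j ∧
      ∀ c ∈ T, (f.derivative + C a * f).IsRoot c ∧ ¬ f.IsRoot c ∧
        ∀ hne : F.Nonempty, c < F.max' hne := by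
  intro j
  induction j with
  | zero => intro F _ _; exact ⟨∅, rfl, by simp⟩
  | succ j ih =>
    intro F hcard hF
    have hne : F.Nonempty := Finset.card_pos.1 (by omega)
    set r := F.max' hne with hr
    have hrF : r ∈ F := F.max'_mem hne
    set F' := F.erase r with hF'
    have hcard' : F'.card = j + 1 := by
      rw [hF', Finset.card_erase_of_mem hrF]; omega
    have hne' : F'.Nonempty := Finset.card_pos.1 (by omega)
    set r' := F'.max' hne' with hr'
    have hr'F' : r' ∈ F' := F'.max'_mem hne'
    have hr'F : r' ∈ F := Finset.mem_of_mem_erase hr'F'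
    have hlt : r' < r := by
      have h1 : r' ≤ r := F.le_max' r' hr'F
      have h2 : r' ≠ r := Finset.ne_of_mem_erase hr'F'
      exact lt_of_le_of_ne h1 h2
    obtain ⟨T', hT'card, hT'⟩ := ih F' hcard' (fun x hx => hF x (Finset.mem_of_mem_erase hx))
    obtain ⟨c, hc1, hc2, hc3, hc4⟩ := exists_root_between f hf a r' r hlt (hF r' hr'F) (hF r hrF)
    have hcT' : c ∉ T' := by
      intro hmem
      have := (hT' c hmem).2.2 hne'
      rw [← hr'] at this; linarith
    refine ⟨insert c T', by rw [Finset.card_insert_of_notMem hcT']; omega, ?_⟩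
    intro d hd
    rcases Finset.mem_insert.1 hd with rfl | hd
    · exact ⟨hc3, hc4, fun _ => by rw [← hr]; exact hc2⟩
    · obtain ⟨h1, h2, h3⟩ := hT' d hd
      exact ⟨h1, h2, fun _ => by have := h3 hne'; rw [← hr'] at this; linarith⟩

lemma pow_sub_one_dvd_deriv {x : ℝ} {m : ℕ} {f : Polynomial ℝ} (hd : (X - C x) ^ m ∣ f) :
    (X - C x) ^ (m - 1) ∣ f.derivative := by
  obtain ⟨u, rfl⟩ := hd
  rw [derivative_mul, derivative_pow]
  refine dvd_add ?_ ?_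
  · exact dvd_mul_of_dvd_left (dvd_mul_of_dvd_left (dvd_mul_left _ _) _) _
  · exact dvd_mul_of_dvd_left (pow_dvd_pow _ (Nat.sub_le m 1)) _

theorem splits_phi (f : Polynomial ℝ) (a : ℝ) (ha : a ≠ 0) (hf : f ≠ 0)
    (hsp : f.Splits) :
    (f.derivative + C a * f) ≠ 0 ∧ (f.derivative + C a * f).natDegree = f.natDegree ∧
      (f.derivative + C a * f).Splits := by
  classical
  set d := f.natDegree with hd
  set g := f.derivative + C a * f with hg
  rcases Nat.eq_zero_or_pos d with h0 | h0
  · obtain ⟨c, rfl⟩ : ∃ c, f = C c := ⟨f.coeff 0, Polynomial.eq_C_of_natDegree_eq_zero h0⟩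
    have hc : c ≠ 0 := fun h => hf (by rw [h, map_zero])
    have hgeq : g = C (a * c) := by rw [hg, derivative_C, zero_add, ← C_mul]
    refine ⟨by rw [hgeq]; exact fun h => hc (by simpa [ha] using (C_eq_zero.1 h)), ?_, ?_⟩
    · rw [hgeq, h0]; exact natDegree_C _
    · rw [hgeq]; exact Splits.C _
  -- main case : d ≥ 1
  have hderlt : f.derivative.natDegree < d := natDegree_derivative_lt (by omega)
  have hcoeff : g.coeff d = a * f.leadingCoeff := by
    rw [hg, coeff_add, coeff_C_mul, coeff_eq_zero_of_natDegree_lt hderlt, zero_add, leadingCoeff]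
  have hcne : g.coeff d ≠ 0 := by
    rw [hcoeff]; exact mul_ne_zero ha (leadingCoeff_ne_zero.2 hf)
  have hgne : g ≠ 0 := fun h => hcne (by rw [h, coeff_zero])
  have hgdeg : g.natDegree = d := by
    refine le_antisymm ?_ (le_natDegree_of_ne_zero hcne)
    rw [hg]
    exact le_trans (natDegree_add_le _ _)
      (max_le (le_trans hderlt.le (le_refl d)) (le_trans (natDegree_C_mul_le _ _) (le_refl d)))
  refine ⟨hgne, hgdeg, ?_⟩
  -- roots of f
  have hRcard : f.roots.card = d := (splits_iff_card_roots.1 hsp)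
  set R := f.roots with hR
  set F := R.toFinset with hF
  have hFroots : ∀ x ∈ F, f.IsRoot x := fun x hx =>
    isRoot_of_mem_roots (Multiset.mem_toFinset.1 hx)
  have hFne : F.Nonempty := by
    have hR0 : R ≠ 0 := by
      intro h; rw [h] at hRcard; simp at hRcard; omega
    obtain ⟨x, hx⟩ := Multiset.exists_mem_of_ne_zero hR0
    exact ⟨x, Multiset.mem_toFinset.2 hx⟩
  set j := F.card with hj
  have hj1 : 1 ≤ j := Finset.card_pos.2 hFne
  have hjd : j ≤ d := by
    have : Multiset.card R.dedup = j := rfl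
    rw [← hRcard, ← this]
    exact Multiset.card_le_card R.dedup_le
  obtain ⟨T, hTcard, hT⟩ := rolle_finset f hf a (j - 1) F (by omega) hFroots
  -- the multiset of guaranteed roots of g
  set S : Multiset ℝ := (R - R.dedup) + T.val with hS
  have hSle : S ≤ g.roots := by
    rw [Multiset.le_iff_count]
    intro x
    rw [count_roots]
    have hcS : S.count x = (R.count x - R.dedup.count x) + T.val.count x := by
      rw [hS, Multiset.count_add, Multiset.count_sub]
    by_cases hxT : x ∈ T
    · obtain ⟨hgx, hfx, _⟩ := hT x hxT
      have hxR : R.count x = 0 := by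
        rw [Multiset.count_eq_zero]
        intro hmem
        exact hfx (isRoot_of_mem_roots hmem)
      have : T.val.count x = 1 := by
        rw [Multiset.count_eq_one_of_mem T.nodup hxT]
      rw [hcS, hxR, this]
      have hle : 1 ≤ rootMultiplicity x g := (rootMultiplicity_pos hgne).2 hgx
      omega
    · have hTc : T.val.count x = 0 := by
        rw [Multiset.count_eq_zero]; exact hxT
      rw [hcS, hTc, add_zero]
      by_cases hxR : x ∈ R
      · have hcR : R.count x = rootMultiplicity x f := count_roots f
        have hdC : R.dedup.count x = 1 := Multiset.count_eq_one_of_mem (Multiset.nodup_dedup R) (Multiset.mem_dedup.2 hxR)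
        rw [hcR, hdC]
        -- show rootMultiplicity x f - 1 ≤ rootMultiplicity x g
        set m := rootMultiplicity x f with hm
        have hdvdf : (X - C x) ^ (m - 1) ∣ f :=
          dvd_trans (pow_dvd_pow _ (Nat.sub_le m 1)) (pow_rootMultiplicity_dvd f x)
        have hdvdd : (X - C x) ^ (m - 1) ∣ f.derivative :=
          pow_sub_one_dvd_deriv (pow_rootMultiplicity_dvd f x)
        have hdvdg : (X - C x) ^ (m - 1) ∣ g := by
          rw [hg]
          exact dvd_add hdvdd (Dvd.dvd.mul_left hdvdf _)
        exact (le_rootMultiplicity_iff hgne).2 hdvdg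
      · have : R.count x = 0 := Multiset.count_eq_zero.2 hxR
        simp [this]
  have hScard : S.card = d - 1 := by
    rw [hS, Multiset.card_add, Multiset.card_sub R.dedup_le]
    have h1 : Multiset.card R = d := hRcard
    have h2 : Multiset.card R.dedup = j := rfl
    have h3 : Multiset.card T.val = j - 1 := hTcard
    rw [h1, h2, h3]
    omega
  -- factor g
  have hdvd : ((S.map fun r => X - C r).prod) ∣ g :=
    dvd_trans (Multiset.prod_dvd_prod_of_le (Multiset.map_le_map hSle))
      (prod_multiset_X_sub_C_dvd g)
  obtain ⟨h, hgh⟩ := hdvd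
  have hprodne : (S.map fun r => X - C r).prod ≠ 0 :=
    (monic_multiset_prod_of_monic _ _ fun r _ => monic_X_sub_C r).ne_zero
  have hhne : h ≠ 0 := by
    intro h0; rw [h0, mul_zero] at hgh; exact hgne hgh
  have hproddeg : ((S.map fun r => X - C r).prod).natDegree = d - 1 := by
    rw [natDegree_multiset_prod_X_sub_C_eq_card, hScard]
  have hhdeg : h.natDegree = 1 := by
    have := natDegree_mul hprodne hhne
    rw [← hgh, hgdeg, hproddeg] at this
    omega
  rw [hgh]
  refine Splits.mul ?_ (Splits.of_natDegree_le_one (by omega))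
  -- splits of multiset product of linear factors
  have : ∀ (M : Multiset ℝ), Splits ((M.map fun r => X - C r).prod) := by
    intro M
    induction M using Multiset.induction with
    | empty => simpa using Splits.one
    | cons r M ih =>
      rw [Multiset.map_cons, Multiset.prod_cons]
      exact Splits.mul (Splits.X_sub_C _) ih
  exact this S

noncomputable def Dop : Module.End ℝ (Polynomial ℝ) := Polynomial.derivative

lemma Dop_pow (j : ℕ) (f : Polynomial ℝ) : (Dop ^ j) f = derivative^[j] f :=
  Module.End.pow_apply _ _ _

lemma aeval_linear (s : ℝ) (f : Polynomial ℝ) :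
    (Polynomial.aeval Dop (X - C s)) f = derivative f + C (-s) * f := by
  simp only [map_sub, aeval_X, aeval_C, LinearMap.sub_apply, Module.algebraMap_end_apply, Dop]
  rw [sub_eq_add_neg, ← neg_smul, smul_eq_C_mul]


-- (D+1)^m (X^M) expansion
lemma W_expand (M m : ℕ) (hm : m ≤ M) :
    ((Dop + 1)^m) (X^M : Polynomial ℝ)
      = X^(M-m) * ∑ j ∈ Finset.range (m+1),
          C ((m.choose j * M.descFactorial (m-j) : ℕ) : ℝ) * X^j := by
  have hcomm : Commute Dop (1 : Module.End ℝ (Polynomial ℝ)) := Commute.one_right _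
  rw [hcomm.add_pow]
  rw [LinearMap.sum_apply]
  rw [Finset.mul_sum]
  rw [← Finset.sum_range_reflect]
  refine Finset.sum_congr rfl fun i hi => ?_
  rw [Finset.mem_range] at hi
  have hi' : i ≤ m := by omega
  have h1 : m + 1 - 1 - i = m - i := by omega
  rw [h1]
  have hmul : (Dop ^ (m-i) * 1 ^ (m - (m-i)) * (m.choose (m-i) : Module.End ℝ (Polynomial ℝ))) (X^M : Polynomial ℝ)
      = (m.choose (m-i) : ℕ) • (Dop ^ (m-i)) (X^M : Polynomial ℝ) := by
    rw [one_pow, mul_one, Module.End.mul_apply, Module.End.natCast_apply, map_nsmul]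
  rw [hmul, Dop_pow, Polynomial.iterate_derivative_X_pow_eq_smul]
  have h3 : M - (m - i) = (M - m) + i := by omega
  rw [h3, Nat.choose_symm hi']
  rw [← Nat.cast_smul_eq_nsmul ℝ, smul_smul, smul_eq_C_mul]
  rw [mul_comm (X^(M-m)) _, mul_assoc, ← pow_add]
  push_cast
  ring

lemma W_splits (M t : ℕ) :
    ((Dop + 1)^t) (X^M : Polynomial ℝ) ≠ 0 ∧
      (((Dop + 1)^t) (X^M : Polynomial ℝ)).Splits := by
  induction t with
  | zero =>
    refine ⟨by simp [pow_ne_zero, X_ne_zero], ?_⟩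
    simpa using Splits.pow Splits.X _
  | succ t ih =>
    obtain ⟨h1, h2⟩ := ih
    rw [pow_succ']
    rw [Module.End.mul_apply]
    set g := ((Dop + 1)^t) (X^M : Polynomial ℝ) with hg
    have : (Dop + 1) g = derivative g + C 1 * g := by
      rw [LinearMap.add_apply, Module.End.one_apply, C_1, one_mul]; rfl
    rw [this]
    obtain ⟨a1, a2, a3⟩ := splits_phi g 1 one_ne_zero h1 h2
    exact ⟨a1, a3⟩

lemma Q_def_splits (M m : ℕ) (hm : m ≤ M) :
    (∑ j ∈ Finset.range (m+1),
        C ((m.choose j * M.descFactorial (m-j) : ℕ) : ℝ) * X^j) ≠ 0 ∧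
    (∑ j ∈ Finset.range (m+1),
        C ((m.choose j * M.descFactorial (m-j) : ℕ) : ℝ) * X^j).Splits := by
  obtain ⟨h1, h2⟩ := W_splits M m
  rw [W_expand M m hm] at h1 h2
  have hX : (X^(M-m) : Polynomial ℝ) ≠ 0 := pow_ne_zero _ X_ne_zero
  have hQ : (∑ j ∈ Finset.range (m+1),
      C ((m.choose j * M.descFactorial (m-j) : ℕ) : ℝ) * X^j) ≠ 0 := by
    intro h; rw [h, mul_zero] at h1; exact h1 rfl
  refine ⟨hQ, ?_⟩
  exact ((splits_mul hX hQ).1 h2).2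

lemma Q_roots_neg (M m : ℕ) (hm : m ≤ M) :
    ∀ s ∈ (∑ j ∈ Finset.range (m+1),
        C ((m.choose j * M.descFactorial (m-j) : ℕ) : ℝ) * X^j).roots, s < 0 := by
  intro s hs
  have hroot := isRoot_of_mem_roots hs
  by_contra hcon
  push_neg at hcon
  have heval : (∑ j ∈ Finset.range (m+1),
      C ((m.choose j * M.descFactorial (m-j) : ℕ) : ℝ) * X^j).eval s
      = ∑ j ∈ Finset.range (m+1), ((m.choose j * M.descFactorial (m-j) : ℕ) : ℝ) * s^j := by
    rw [eval_finset_sum]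
    exact Finset.sum_congr rfl fun j _ => by rw [eval_mul, eval_C, eval_pow, eval_X]
  have hpos : 0 < ∑ j ∈ Finset.range (m+1), ((m.choose j * M.descFactorial (m-j) : ℕ) : ℝ) * s^j := by
    refine Finset.sum_pos' (fun j _ => mul_nonneg (Nat.cast_nonneg _) (pow_nonneg hcon j)) ?_
    refine ⟨0, Finset.mem_range.2 (by omega), ?_⟩
    simp only [Nat.choose_zero_right, one_mul, Nat.sub_zero, pow_zero, mul_one]
    have : 0 < M.descFactorial m :=
      Nat.pos_of_ne_zero (fun h => by have := Nat.descFactorial_eq_zero_iff_lt.1 h; omega)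
    exact_mod_cast this
  rw [Polynomial.IsRoot, heval] at hroot
  linarith

lemma chain (L : List ℝ) (hL : ∀ s ∈ L, s < 0) :
    ∀ f : Polynomial ℝ, f ≠ 0 → f.Splits →
      ((L.map (fun s => Polynomial.aeval Dop (X - C s))).prod) f ≠ 0 ∧
      (((L.map (fun s => Polynomial.aeval Dop (X - C s))).prod) f).Splits := by
  induction L with
  | nil => intro f hf hsp; simpa using ⟨hf, hsp⟩
  | cons s S ih =>
    intro f hf hsp
    have hs : s < 0 := hL s List.mem_cons_self
    have hS' : ∀ x ∈ S, x < 0 := fun x hx => hL x (List.mem_cons_of_mem _ hx)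
    obtain ⟨h1, h2⟩ := ih hS' f hf hsp
    set g := ((S.map (fun s => Polynomial.aeval Dop (X - C s))).prod) f with hg
    rw [List.map_cons, List.prod_cons, Module.End.mul_apply]
    rw [← hg, aeval_linear]
    obtain ⟨a1, _, a3⟩ := splits_phi g (-s) (by linarith) h1 h2
    exact ⟨a1, a3⟩

lemma aeval_Q_splits (Q : Polynomial ℝ) (hQne : Q ≠ 0) (hQS : Q.Splits)
    (hneg : ∀ s ∈ Q.roots, s < 0) (f : Polynomial ℝ) (hf : f ≠ 0)
    (hsp : f.Splits) :
    ((Polynomial.aeval Dop Q) f ≠ 0) ∧ ((Polynomial.aeval Dop Q) f).Splits := by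
  have hfact := Splits.eq_prod_roots hQS
  have hlist : (Q.roots.map (fun a => X - C a)).prod
      = ((Q.roots.toList.map (fun a => X - C a)).prod) := by
    conv_lhs => rw [← Q.roots.coe_toList]
    rw [Multiset.map_coe, Multiset.prod_coe]
  have : (Polynomial.aeval Dop Q) f
      = Q.leadingCoeff • (((Q.roots.toList.map (fun s => Polynomial.aeval Dop (X - C s))).prod) f) := by
    conv_lhs => rw [hfact, hlist]
    rw [map_mul, aeval_C, map_list_prod, List.map_map]
    rw [Module.End.mul_apply, Module.algebraMap_end_apply]
    rfl
  rw [this]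
  obtain ⟨h1, h2⟩ := chain Q.roots.toList
    (fun x hx => hneg x (by rwa [← Multiset.mem_toList])) f hf hsp
  have hlc : Q.leadingCoeff ≠ 0 := leadingCoeff_ne_zero.2 hQne
  refine ⟨smul_ne_zero hlc h1, ?_⟩
  rw [smul_eq_C_mul]
  exact Splits.mul (Splits.C _) h2

lemma coeff_sum_C_mul_X_pow (d : ℕ) (b : ℕ → ℝ) (i : ℕ) :
    (∑ k ∈ Finset.range (d+1), C (b k) * X^k).coeff i = if i ≤ d then b i else 0 := by
  rw [finset_sum_coeff]
  by_cases hi : i ≤ d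
  · rw [if_pos hi]
    rw [Finset.sum_eq_single i (fun k _ hk => by rw [coeff_C_mul, coeff_X_pow, if_neg (Ne.symm hk), mul_zero])
      (fun h => absurd (Finset.mem_range.2 (by omega)) h)]
    rw [coeff_C_mul, coeff_X_pow, if_pos rfl, mul_one]
  · rw [if_neg hi]
    refine Finset.sum_eq_zero fun k hk => ?_
    rw [coeff_C_mul, coeff_X_pow, if_neg (by rw [Finset.mem_range] at hk; omega), mul_zero]

lemma cast_descFactorial_add (x y : ℕ) :
    (((x+y).descFactorial y : ℕ) : ℝ) = ((x+y).factorial : ℝ) / (x.factorial : ℝ) := by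
  have h := Nat.factorial_mul_descFactorial (Nat.le_add_left y x)
  rw [Nat.add_sub_cancel] at h
  rw [eq_div_iff (Nat.cast_ne_zero.2 (Nat.factorial_ne_zero x))]
  rw [mul_comm]
  exact_mod_cast congrArg (Nat.cast : ℕ → ℝ) h

-- key termwise identity
lemma key_identity (N K n j : ℕ) (hKN : K ≤ N) (hKn : K ≤ n) (hnN : n ≤ N) (hjK : j ≤ K) :
    (((N-n).factorial * (K.choose (K-j) * (N-K).choose (n-(K-j))) : ℕ) : ℝ)
      = (((N-n).choose j * (N-K).descFactorial ((N-n)-j) * K.descFactorial j : ℕ) : ℝ) := by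
  by_cases hjm : j ≤ N - n
  · -- in range : set variables
    obtain ⟨u, hu⟩ : ∃ u, N - n = j + u := ⟨N - n - j, by omega⟩
    obtain ⟨v, hv⟩ : ∃ v, K = j + v := ⟨K - j, by omega⟩
    obtain ⟨w, hw⟩ : ∃ w, n = K + w := ⟨n - K, by omega⟩
    have h1 : K - j = v := by omega
    have h2 : n - (K - j) = w + j := by omega
    have h3 : N - K = w + j + u := by omega
    have h4 : N - n - j = u := by omega
    rw [h2, h1, h3, h4, hu, hv]
    have e1 : (j + v).choose v = (j + v).choose j := by rw [Nat.choose_symm_add, Nat.add_comm j v, Nat.choose_symm_add]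
    rw [e1]
    have c1 : (((j+v).choose j : ℕ) : ℝ) = ((j+v).factorial : ℝ) / ((j.factorial : ℝ) * (v.factorial : ℝ)) := by
      rw [Nat.cast_add_choose]
    have c2 : (((w+j+u).choose (w+j) : ℕ) : ℝ) = ((w+j+u).factorial : ℝ) / (((w+j).factorial : ℝ) * (u.factorial : ℝ)) := by
      have : w + j + u = (w+j) + u := by ring
      rw [this, Nat.cast_choose ℝ (Nat.le_add_right _ _), Nat.add_sub_cancel_left]
    have c3 : (((j+u).choose j : ℕ) : ℝ) = ((j+u).factorial : ℝ) / ((j.factorial : ℝ) * (u.factorial : ℝ)) := by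
      rw [Nat.cast_add_choose]
    have c4 : (((w+j+u).descFactorial u : ℕ) : ℝ) = ((w+j+u).factorial : ℝ) / ((w+j).factorial : ℝ) := by
      have : w + j + u = (w+j) + u := by ring
      rw [this, cast_descFactorial_add]
    have c5 : (((j+v).descFactorial j : ℕ) : ℝ) = ((j+v).factorial : ℝ) / (v.factorial : ℝ) := by
      have : j + v = v + j := by ring
      rw [this, cast_descFactorial_add]
    push_cast [c1, c2, c3, c4, c5]
    have f1 : (j.factorial : ℝ) ≠ 0 := Nat.cast_ne_zero.2 (Nat.factorial_ne_zero _)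
    have f2 : (v.factorial : ℝ) ≠ 0 := Nat.cast_ne_zero.2 (Nat.factorial_ne_zero _)
    have f3 : (u.factorial : ℝ) ≠ 0 := Nat.cast_ne_zero.2 (Nat.factorial_ne_zero _)
    have f4 : ((w+j).factorial : ℝ) ≠ 0 := Nat.cast_ne_zero.2 (Nat.factorial_ne_zero _)
    field_simp
  · -- out of range : both sides zero
    have hz1 : (N-K).choose (n-(K-j)) = 0 := by
      apply Nat.choose_eq_zero_of_lt; omega
    have hz2 : (N-n).choose j = 0 := Nat.choose_eq_zero_of_lt (by omega)
    rw [hz1, hz2]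
    push_cast
    ring

lemma sym_identity (N K n k : ℕ) (hKN : K ≤ N) (hnN : n ≤ N) (hkK : k ≤ K) (hkn : k ≤ n) :
    ((K.choose k * (N-K).choose (n-k) : ℕ) : ℝ) * ((N.choose K : ℕ) : ℝ)
      = ((n.choose k * (N-n).choose (K-k) : ℕ) : ℝ) * ((N.choose n : ℕ) : ℝ) := by
  by_cases hr : n - k ≤ N - K
  · obtain ⟨b, hb⟩ : ∃ b, K = k + b := ⟨K - k, by omega⟩
    obtain ⟨c, hc⟩ : ∃ c, n = k + c := ⟨n - k, by omega⟩
    obtain ⟨d, hd⟩ : ∃ d, N = k + b + c + d := ⟨N - K - (n-k), by omega⟩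
    have h1 : n - k = c := by omega
    have h2 : K - k = b := by omega
    have h3 : N - K = c + d := by omega
    have h4 : N - n = b + d := by omega
    rw [h1, h2, h3, h4, hb, hc, hd]
    have e0 : k + b + c + d = (k+b) + (c+d) := by ring
    have e1 : k + b + c + d = (k+c) + (b+d) := by ring
    have c1 : (((k+b).choose k : ℕ) : ℝ) = ((k+b).factorial : ℝ) / ((k.factorial : ℝ) * (b.factorial : ℝ)) := by
      rw [Nat.cast_add_choose]
    have c2 : (((c+d).choose c : ℕ) : ℝ) = ((c+d).factorial : ℝ) / ((c.factorial : ℝ) * (d.factorial : ℝ)) := by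
      rw [Nat.cast_add_choose]
    have c3 : (((k+c).choose k : ℕ) : ℝ) = ((k+c).factorial : ℝ) / ((k.factorial : ℝ) * (c.factorial : ℝ)) := by
      rw [Nat.cast_add_choose]
    have c4 : (((b+d).choose b : ℕ) : ℝ) = ((b+d).factorial : ℝ) / ((b.factorial : ℝ) * (d.factorial : ℝ)) := by
      rw [Nat.cast_add_choose]
    have c5 : (((k+b+c+d).choose (k+b) : ℕ) : ℝ)
        = ((k+b+c+d).factorial : ℝ) / (((k+b).factorial : ℝ) * ((c+d).factorial : ℝ)) := by
      rw [e0, Nat.cast_add_choose]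
    have c6 : (((k+b+c+d).choose (k+c) : ℕ) : ℝ)
        = ((k+b+c+d).factorial : ℝ) / (((k+c).factorial : ℝ) * ((b+d).factorial : ℝ)) := by
      rw [e1, Nat.cast_add_choose]
    push_cast [c1, c2, c3, c4, c5, c6]
    have f : ∀ t : ℕ, (t.factorial : ℝ) ≠ 0 := fun t => Nat.cast_ne_zero.2 (Nat.factorial_ne_zero t)
    field_simp
  · have hz1 : (N-K).choose (n-k) = 0 := Nat.choose_eq_zero_of_lt (by omega)
    have hz2 : (N-n).choose (K-k) = 0 := Nat.choose_eq_zero_of_lt (by omega)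
    rw [hz1, hz2]
    push_cast
    ring

lemma masterP (N K n : ℕ) (hKN : K ≤ N) (hKn : K ≤ n) (hnN : n ≤ N) :
    (∑ k ∈ Finset.range (K+1), C ((K.choose k * (N-K).choose (n-k) : ℕ) : ℝ) * X^k) ≠ 0 ∧
    (∑ k ∈ Finset.range (K+1), C ((K.choose k * (N-K).choose (n-k) : ℕ) : ℝ) * X^k).natDegree = K ∧
    (∑ k ∈ Finset.range (K+1), C ((K.choose k * (N-K).choose (n-k) : ℕ) : ℝ) * X^k).Splits := by
  set M := N - K with hM
  set m := N - n with hm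
  have hmM : m ≤ M := by omega
  set P : Polynomial ℝ := ∑ k ∈ Finset.range (K+1),
    C ((K.choose k * M.choose (n-k) : ℕ) : ℝ) * X^k with hP
  set Q : Polynomial ℝ := ∑ j ∈ Finset.range (m+1),
    C ((m.choose j * M.descFactorial (m-j) : ℕ) : ℝ) * X^j with hQ
  obtain ⟨hQne, hQS⟩ := Q_def_splits M m hmM
  have hQneg := Q_roots_neg M m hmM
  have hXK : (X^K : Polynomial ℝ) ≠ 0 := pow_ne_zero _ X_ne_zero
  have hXKs : (X^K : Polynomial ℝ).Splits := Splits.pow Splits.X _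
  obtain ⟨hEne, hES⟩ := aeval_Q_splits Q hQne hQS hQneg (X^K) hXK hXKs
  set E : Polynomial ℝ := (Polynomial.aeval Dop Q) (X^K) with hE
  -- coefficients of Q
  have hQcoeff : ∀ i, Q.coeff i
      = if i ≤ m then ((m.choose i * M.descFactorial (m-i) : ℕ) : ℝ) else 0 := fun i =>
    coeff_sum_C_mul_X_pow m _ i
  have hQdeg : Q.natDegree < m + 1 := by
    have : Q.natDegree ≤ m := natDegree_le_iff_coeff_eq_zero.2 fun i hi => by
      rw [hQcoeff i, if_neg (by omega)]
    omega
  -- expand E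
  set g : ℕ → Polynomial ℝ := fun j =>
    C ((m.choose j * M.descFactorial (m-j) * K.descFactorial j : ℕ) : ℝ) * X^(K-j) with hgdef
  have hEsum : E = ∑ j ∈ Finset.range (m+1), g j := by
    rw [hE, Polynomial.aeval_eq_sum_range' hQdeg, LinearMap.sum_apply]
    refine Finset.sum_congr rfl fun j hj => ?_
    rw [Finset.mem_range] at hj
    rw [LinearMap.smul_apply, Dop_pow, Polynomial.iterate_derivative_X_pow_eq_smul]
    rw [hQcoeff j, if_pos (by omega)]
    simp only [hgdef]
    rw [smul_smul, smul_eq_C_mul]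
    push_cast
    ring_nf
  -- LHS reflected
  have hLHS : ((m.factorial : ℕ) : ℝ) • P = ∑ j ∈ Finset.range (K+1), g j := by
    rw [hP, Finset.smul_sum, ← Finset.sum_range_reflect]
    refine Finset.sum_congr rfl fun j hj => ?_
    rw [Finset.mem_range] at hj
    have h1 : K + 1 - 1 - j = K - j := by omega
    rw [h1, smul_eq_C_mul, ← mul_assoc, ← C_mul]
    have hkey := key_identity N K n j hKN hKn hnN (by omega)
    simp only [hgdef]
    congr 1
    rw [← hkey]
    push_cast
    ring
  -- bridge ranges
  have hvan1 : ∀ j, K < j → g j = 0 := fun j hj => by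
    simp only [hgdef]
    have : K.descFactorial j = 0 := Nat.descFactorial_eq_zero_iff_lt.2 hj
    rw [this, Nat.mul_zero, Nat.cast_zero, map_zero, zero_mul]
  have hvan2 : ∀ j, m < j → g j = 0 := fun j hj => by
    simp only [hgdef]
    have : m.choose j = 0 := Nat.choose_eq_zero_of_lt hj
    rw [this, Nat.zero_mul, Nat.zero_mul, Nat.cast_zero, map_zero, zero_mul]
  have hbig : ∑ j ∈ Finset.range (K+1), g j = ∑ j ∈ Finset.range (m+1), g j := by
    have e1 : ∑ j ∈ Finset.range (K+1), g j = ∑ j ∈ Finset.range (max m K + 1), g j := by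
      refine Finset.sum_subset (Finset.range_subset_range.2 (by omega)) fun j hj hnj => ?_
      rw [Finset.mem_range] at hj
      rw [Finset.mem_range] at hnj
      exact hvan1 j (by omega)
    have e2 : ∑ j ∈ Finset.range (m+1), g j = ∑ j ∈ Finset.range (max m K + 1), g j := by
      refine Finset.sum_subset (Finset.range_subset_range.2 (by omega)) fun j hj hnj => ?_
      rw [Finset.mem_range] at hj
      rw [Finset.mem_range] at hnj
      exact hvan2 j (by omega)
    rw [e1, e2]
  have hPE : ((m.factorial : ℕ) : ℝ) • P = E := by rw [hLHS, hbig, hEsum]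
  have hfac : ((m.factorial : ℕ) : ℝ) ≠ 0 := Nat.cast_ne_zero.2 (Nat.factorial_ne_zero m)
  have hPne : P ≠ 0 := by
    intro h
    rw [h, smul_zero] at hPE
    exact hEne hPE.symm
  have hPS : P.Splits := by
    have : P = ((m.factorial : ℕ) : ℝ)⁻¹ • E := by
      rw [← hPE, inv_smul_smul₀ hfac]
    rw [this, smul_eq_C_mul]
    exact Splits.mul (Splits.C _) hES
  -- natDegree
  have hPcoeff : ∀ i, P.coeff i
      = if i ≤ K then ((K.choose i * M.choose (n-i) : ℕ) : ℝ) else 0 := fun i =>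
    coeff_sum_C_mul_X_pow K _ i
  have hcK : P.coeff K ≠ 0 := by
    rw [hPcoeff K, if_pos le_rfl, Nat.choose_self, one_mul]
    exact Nat.cast_ne_zero.2 (Nat.choose_pos (show n - K ≤ M by omega)).ne'
  have hPdeg : P.natDegree = K :=
    le_antisymm (natDegree_le_iff_coeff_eq_zero.2 fun i hi => by
      rw [hPcoeff i, if_neg (by omega)]) (le_natDegree_of_ne_zero hcK)
  exact ⟨hPne, hPdeg, hPS⟩

lemma zchoose_coe (a b : ℕ) : zchoose (a:ℤ) (b:ℤ) = (a.choose b : ℤ) := by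
  unfold zchoose
  by_cases h : b ≤ a
  · rw [if_pos ⟨Int.ofNat_nonneg b, by exact_mod_cast h⟩]
    simp
  · rw [if_neg (fun hc => h (by exact_mod_cast hc.2)), Nat.choose_eq_zero_of_lt (by omega)]
    simp

lemma hyp_cast (N K n k : ℕ) (hKN : K ≤ N) (hnN : n ≤ N) (hkK : k ≤ K) (hkn : k ≤ n) :
    hypPMF (N:ℤ) (K:ℤ) (n:ℤ) (k:ℤ)
      = ((K.choose k * (N-K).choose (n-k) : ℕ) : ℝ) / ((N.choose n : ℕ) : ℝ) := by
  unfold hypPMF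
  rw [show (N:ℤ) - (K:ℤ) = ((N-K : ℕ):ℤ) by push_cast [hKN]; ring,
      show (n:ℤ) - (k:ℤ) = ((n-k : ℕ):ℤ) by push_cast [hkn]; ring,
      zchoose_coe, zchoose_coe, zchoose_coe]
  push_cast
  ring_nf

lemma final_of (N K n : ℕ) (hKN : K ≤ N) (hnN : n ≤ N) (hKn : K ≤ n)
    (G : Polynomial ℝ)
    (hG : G = ∑ k ∈ Finset.range (K+1),
      C (((K.choose k * (N-K).choose (n-k) : ℕ):ℝ) / ((N.choose n : ℕ):ℝ)) * X^k) :
    G.natDegree = K ∧ ∀ z : ℂ, (G.map (algebraMap ℝ ℂ)).eval z = 0 → z.im = 0 ∧ z.re ≤ 0 := by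
  obtain ⟨hPne, hPdeg, hPS⟩ := masterP N K n hKN hKn hnN
  set P : Polynomial ℝ := ∑ k ∈ Finset.range (K+1),
    C ((K.choose k * (N-K).choose (n-k) : ℕ) : ℝ) * X^k with hP
  have hcpos : (0:ℝ) < ((N.choose n : ℕ) : ℝ) := by
    exact_mod_cast Nat.choose_pos hnN
  have hGP : G = C (((N.choose n : ℕ):ℝ))⁻¹ * P := by
    rw [hG, hP, Finset.mul_sum]
    refine Finset.sum_congr rfl fun k _ => ?_
    rw [← mul_assoc, ← C_mul, inv_mul_eq_div]
  have hGne : G ≠ 0 := by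
    rw [hGP]
    exact mul_ne_zero (fun h => by simpa [C_eq_zero] using absurd (C_eq_zero.1 h) (by positivity)) hPne
  have hGS : G.Splits := by
    rw [hGP]; exact Splits.mul (Splits.C _) hPS
  have hGcoeff : ∀ i, G.coeff i = if i ≤ K then
      (((K.choose i * (N-K).choose (n-i) : ℕ):ℝ) / ((N.choose n : ℕ):ℝ)) else 0 := fun i => by
    rw [hG]; exact coeff_sum_C_mul_X_pow K _ i
  have hcK : G.coeff K ≠ 0 := by
    rw [hGcoeff K, if_pos le_rfl, Nat.choose_self, one_mul]
    have : 0 < (N-K).choose (n-K) := Nat.choose_pos (by omega)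
    positivity
  have hGdeg : G.natDegree = K :=
    le_antisymm (natDegree_le_iff_coeff_eq_zero.2 fun i hi => by
      rw [hGcoeff i, if_neg (by omega)]) (le_natDegree_of_ne_zero hcK)
  refine ⟨hGdeg, fun z hz => ?_⟩
  have hmapne : G.map (algebraMap ℝ ℂ) ≠ 0 :=
    (Polynomial.map_ne_zero_iff (algebraMap ℝ ℂ).injective).2 hGne
  have hzmem : z ∈ (G.map (algebraMap ℝ ℂ)).roots := (mem_roots hmapne).2 hz
  rw [hGS.roots_map] at hzmem
  obtain ⟨r, hr, rfl⟩ := Multiset.mem_map.1 hzmem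
  have hrle : r ≤ 0 := by
    by_contra hrpos
    push_neg at hrpos
    have hreval : G.eval r = 0 := isRoot_of_mem_roots hr
    have : 0 < G.eval r := by
      rw [hG, eval_finset_sum]
      refine Finset.sum_pos' (fun k _ => by
        have : (0:ℝ) ≤ ((K.choose k * (N-K).choose (n-k) : ℕ):ℝ) / ((N.choose n : ℕ):ℝ) := by positivity
        rw [eval_mul, eval_C, eval_pow, eval_X]
        positivity) ⟨K, Finset.mem_range.2 (by omega), ?_⟩
      rw [eval_mul, eval_C, eval_pow, eval_X, Nat.choose_self, one_mul]
      have h1 : 0 < (N-K).choose (n-K) := Nat.choose_pos (by omega)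
      positivity
    linarith
  have : (algebraMap ℝ ℂ) r = Complex.ofReal r := rfl
  rw [this]
  exact ⟨Complex.ofReal_im r, by rw [Complex.ofReal_re]; exact hrle⟩


end HypProof

open Polynomial Set Finset in
/-- The pgf of the hypergeometric distribution has degree min n K and all its
roots are real and non-positive. -/
theorem hypergeometric_pgf_real_rooted (N K n : ℕ) (hN : 1 ≤ N) (hKN : K ≤ N) (hnN : n ≤ N) :
    let G : Polynomial ℝ :=
      ∑ k ∈ Finset.range (min n K + 1),
        Polynomial.C (hypPMF (N : ℤ) (K : ℤ) (n : ℤ) (k : ℤ)) * Polynomial.X ^ k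
    G.natDegree = min n K ∧
      ∀ z : ℂ, (G.map (algebraMap ℝ ℂ)).eval z = 0 → z.im = 0 ∧ z.re ≤ 0 := by
  intro G
  have hGdef : G = ∑ k ∈ Finset.range (min n K + 1),
      C (hypPMF (N : ℤ) (K : ℤ) (n : ℤ) (k : ℤ)) * X ^ k := rfl
  by_cases hKn : K ≤ n
  · have hmin : min n K = K := min_eq_right hKn
    rw [hmin] at hGdef ⊢
    refine final_of N K n hKN hnN hKn G ?_
    rw [hGdef]
    refine Finset.sum_congr rfl fun k hk => ?_
    rw [Finset.mem_range] at hk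
    rw [hyp_cast N K n k hKN hnN (by omega) (by omega)]
  · push_neg at hKn
    have hmin : min n K = n := min_eq_left hKn.le
    rw [hmin] at hGdef ⊢
    refine final_of N n K hnN hKN hKn.le G ?_
    rw [hGdef]
    refine Finset.sum_congr rfl fun k hk => ?_
    rw [Finset.mem_range] at hk
    have hkn : k ≤ n := by omega
    have hkK : k ≤ K := by omega
    have h1 : (0:ℝ) < ((N.choose n : ℕ) : ℝ) := by exact_mod_cast Nat.choose_pos hnN
    have h2 : (0:ℝ) < ((N.choose K : ℕ) : ℝ) := by exact_mod_cast Nat.choose_pos hKN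
    have hsym : hypPMF (N : ℤ) (K : ℤ) (n : ℤ) (k : ℤ)
        = ((n.choose k * (N-n).choose (K-k) : ℕ):ℝ) / ((N.choose K : ℕ):ℝ) := by
      rw [hyp_cast N K n k hKN hnN hkK hkn, div_eq_div_iff h1.ne' h2.ne']
      exact sym_identity N K n k hKN hnN hkK hkn
    rw [hsym]
end

section
/- Let X ~ Hypergeometric(N,K,n) with 0 < n ≤ K < N, and suppose d is an integer with nK/N + 1 ≤ d ≤ n. Then Pr[X ≥ d] ≤ min{ exp(−n D(d/n ∥ K/N)), exp(−K D(d/K ∥ n/N)) }. -/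
open Finset

lemma choose_mul' {n k s : ℕ} (hsk : s ≤ k) :
    n.choose k * k.choose s = n.choose s * (n - s).choose (k - s) := by
  by_cases hkn : k ≤ n
  · exact Nat.choose_mul hsk
  · push_neg at hkn
    rw [Nat.choose_eq_zero_of_lt hkn, Nat.zero_mul]
    by_cases hsn : s ≤ n
    · rw [Nat.choose_eq_zero_of_lt (by omega : n - s < k - s), Nat.mul_zero]
    · rw [Nat.choose_eq_zero_of_lt (by omega), Nat.zero_mul]

lemma vand (K M n j : ℕ) (hj : j ≤ n) :
    ∑ k ∈ range (n + 1), K.choose k * k.choose j * M.choose (n - k)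
      = K.choose j * (K - j + M).choose (n - j) := by
  have h1 : ∑ k ∈ range (n + 1), K.choose k * k.choose j * M.choose (n - k)
      = ∑ k ∈ Ico j (n + 1), K.choose k * k.choose j * M.choose (n - k) := by
    refine (Finset.sum_subset ?_ ?_).symm
    · intro x hx; simp at hx ⊢; omega
    · intro x hx hx'
      simp only [mem_range, mem_Ico] at hx hx'
      rw [Nat.choose_eq_zero_of_lt (by omega : x < j), Nat.mul_zero, Nat.zero_mul]
  rw [h1, Finset.sum_Ico_eq_sum_range]
  have h2 : ∀ i, K.choose (j + i) * (j + i).choose j * M.choose (n - (j + i))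
      = K.choose j * ((K - j).choose i * M.choose ((n - j) - i)) := by
    intro i
    rw [choose_mul' (Nat.le_add_right j i)]
    simp only [Nat.add_sub_cancel_left]
    rw [Nat.sub_add_eq n j i]  -- n - (j+i) = n - j - i
    ring
  simp only [h2]
  rw [← Finset.mul_sum]
  congr 1
  have h3 : n + 1 - j = (n - j) + 1 := by omega
  rw [h3, Nat.add_choose_eq]
  rw [Finset.Nat.sum_antidiagonal_eq_sum_range_succ_mk]


lemma dF_le (K N : ℕ) (h : K ≤ N) : ∀ j, K.descFactorial j * N ^ j ≤ N.descFactorial j * K ^ j := by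
  intro j
  induction j with
  | zero => simp
  | succ j ih =>
    rw [Nat.descFactorial_succ, Nat.descFactorial_succ, pow_succ, pow_succ]
    have h1 : (K - j) * N ≤ (N - j) * K := by
      rw [Nat.sub_mul, Nat.sub_mul, mul_comm N K]
      exact Nat.sub_le_sub_left (Nat.mul_le_mul_left j h) (K * N)
    calc (K - j) * K.descFactorial j * (N ^ j * N)
        = ((K - j) * N) * (K.descFactorial j * N ^ j) := by ring
      _ ≤ ((N - j) * K) * (N.descFactorial j * K ^ j) := Nat.mul_le_mul h1 ih
      _ = (N - j) * N.descFactorial j * (K ^ j * K) := by ring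

lemma choose_pow_le (K N j : ℕ) (h : K ≤ N) : K.choose j * N ^ j ≤ N.choose j * K ^ j := by
  have hd := dF_le K N h j
  rw [Nat.descFactorial_eq_factorial_mul_choose, Nat.descFactorial_eq_factorial_mul_choose] at hd
  have hj := Nat.factorial_pos j
  have h2 : j.factorial * (K.choose j * N ^ j) ≤ j.factorial * (N.choose j * K ^ j) := by
    rw [← Nat.mul_assoc, ← Nat.mul_assoc]; exact hd
  exact Nat.le_of_mul_le_mul_left h2 hj

lemma chvatal (N K n : ℕ) (hK : K ≤ N) (hn : n ≤ N) (hN : 0 < N) (t : ℝ) (ht : 1 ≤ t) :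
    ∑ k ∈ range (n + 1), ((K.choose k * (N - K).choose (n - k) : ℕ) : ℝ) * t ^ k
      ≤ (N.choose n : ℝ) * (1 - (K : ℝ) / N + (K : ℝ) / N * t) ^ n := by
  have htm : (0:ℝ) ≤ t - 1 := by linarith
  have step1 : ∑ k ∈ range (n + 1), ((K.choose k * (N - K).choose (n - k) : ℕ) : ℝ) * t ^ k
      = ∑ j ∈ range (n + 1),
          (t - 1) ^ j * ((K.choose j * (K - j + (N - K)).choose (n - j) : ℕ) : ℝ) := by
    have hexp : ∀ k ∈ range (n + 1), ((K.choose k * (N - K).choose (n - k) : ℕ) : ℝ) * t ^ k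
        = ∑ j ∈ range (n + 1),
            (t - 1) ^ j * ((K.choose k * k.choose j * (N - K).choose (n - k) : ℕ) : ℝ) := by
      intro k hk
      simp only [mem_range] at hk
      have ht' : t = (t - 1) + 1 := by ring
      rw [ht', add_pow]
      simp only [one_pow, mul_one]
      rw [Finset.mul_sum]
      rw [← Finset.sum_subset (Finset.range_subset_range.2 (by omega : k + 1 ≤ n + 1))
        (fun j hj hj' => by
          simp only [mem_range] at hj hj'
          rw [Nat.choose_eq_zero_of_lt (by omega : k < j)]
          push_cast; ring)]
      apply Finset.sum_congr rfl
      intro j hj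
      push_cast
      ring
    rw [Finset.sum_congr rfl hexp, Finset.sum_comm]
    apply Finset.sum_congr rfl
    intro j hj
    simp only [mem_range] at hj
    rw [← Finset.mul_sum, ← Nat.cast_sum, vand K (N - K) n j (by omega)]
  rw [step1]
  have step2 : ∀ j ∈ range (n + 1),
      (t - 1) ^ j * ((K.choose j * (K - j + (N - K)).choose (n - j) : ℕ) : ℝ)
        ≤ (N.choose n : ℝ) * ((n.choose j : ℝ) * ((K : ℝ) / N) ^ j * (t - 1) ^ j) := by
    intro j hj
    simp only [mem_range] at hj
    have hjn : j ≤ n := by omega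
    by_cases hjK : j ≤ K
    · have he : K - j + (N - K) = N - j := by omega
      rw [he]
      have hc : (K.choose j : ℝ) ≤ (N.choose j : ℝ) * ((K : ℝ) / N) ^ j := by
        have h5 := choose_pow_le K N j hK
        have hNp : (0:ℝ) < (N : ℝ) ^ j := by positivity
        rw [div_pow, ← mul_div_assoc, le_div_iff₀ hNp]
        calc (K.choose j : ℝ) * (N : ℝ) ^ j = ((K.choose j * N ^ j : ℕ) : ℝ) := by push_cast; ring
          _ ≤ ((N.choose j * K ^ j : ℕ) : ℝ) := by exact_mod_cast h5
          _ = (N.choose j : ℝ) * (K : ℝ) ^ j := by push_cast; ring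
      have hid : (N.choose n : ℝ) * (n.choose j : ℝ) = (N.choose j : ℝ) * ((N - j).choose (n - j) : ℝ) := by
        exact_mod_cast congrArg (fun m : ℕ => (m : ℝ)) (Nat.choose_mul hjn)
      calc (t - 1) ^ j * ((K.choose j * (N - j).choose (n - j) : ℕ) : ℝ)
          = ((K.choose j : ℝ) * ((N - j).choose (n - j) : ℝ)) * (t - 1) ^ j := by push_cast; ring
        _ ≤ ((N.choose j : ℝ) * ((K : ℝ) / N) ^ j * ((N - j).choose (n - j) : ℝ)) * (t - 1) ^ j := by
            apply mul_le_mul_of_nonneg_right _ (pow_nonneg htm j)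
            apply mul_le_mul_of_nonneg_right hc (Nat.cast_nonneg _)
        _ = (N.choose n : ℝ) * ((n.choose j : ℝ) * ((K : ℝ) / N) ^ j * (t - 1) ^ j) := by
            rw [show (N.choose n : ℝ) * ((n.choose j : ℝ) * ((K : ℝ) / N) ^ j * (t - 1) ^ j)
              = ((N.choose n : ℝ) * (n.choose j : ℝ)) * (((K : ℝ) / N) ^ j * (t - 1) ^ j) from by ring,
              hid]
            ring
    · rw [Nat.choose_eq_zero_of_lt (by omega : K < j)]
      push_cast
      have : (0:ℝ) ≤ (N.choose n : ℝ) * ((n.choose j : ℝ) * ((K : ℝ) / N) ^ j * (t - 1) ^ j) := by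
        positivity
      linarith [this]
  calc ∑ j ∈ range (n + 1), (t - 1) ^ j * ((K.choose j * (K - j + (N - K)).choose (n - j) : ℕ) : ℝ)
      ≤ ∑ j ∈ range (n + 1), (N.choose n : ℝ) * ((n.choose j : ℝ) * ((K : ℝ) / N) ^ j * (t - 1) ^ j) :=
        Finset.sum_le_sum step2
    _ = (N.choose n : ℝ) * (1 - (K : ℝ) / N + (K : ℝ) / N * t) ^ n := by
        rw [← Finset.mul_sum]
        congr 1
        have : (1 - (K : ℝ) / N + (K : ℝ) / N * t) = ((K : ℝ) / N * (t - 1)) + 1 := by ring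
        rw [this, add_pow]
        simp only [one_pow, mul_one]
        apply Finset.sum_congr rfl
        intro j hj
        rw [mul_pow]
        ring

lemma zchoose_eq (a b : ℤ) (ha : 0 ≤ a) (hb : 0 ≤ b) :
    zchoose a b = ((a.toNat).choose b.toNat : ℤ) := by
  unfold zchoose
  split_ifs with h
  · rfl
  · rw [Nat.choose_eq_zero_of_lt (by omega)]; rfl

lemma zchoose_nonneg (a b : ℤ) : 0 ≤ zchoose a b := by
  unfold zchoose; split_ifs <;> positivity

lemma zchoose_zero_of_neg (a b : ℤ) (h : b < 0) : zchoose a b = 0 := by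
  unfold zchoose; rw [if_neg]; omega

lemma zchoose_zero_of_gt (a b : ℤ) (h : a < b) : zchoose a b = 0 := by
  unfold zchoose
  split_ifs with h'
  · rw [Nat.choose_eq_zero_of_lt (by omega)]; rfl
  · rfl

lemma hypPMF_nonneg (N K n k : ℤ) : 0 ≤ hypPMF N K n k := by
  unfold hypPMF
  apply div_nonneg
  · exact_mod_cast mul_nonneg (zchoose_nonneg _ _) (zchoose_nonneg _ _)
  · exact_mod_cast zchoose_nonneg _ _

lemma hypPMF_zero_of_gt (N K n k : ℤ) (h : n < k) : hypPMF N K n k = 0 := by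
  unfold hypPMF
  rw [zchoose_zero_of_neg (N - K) (n - k) (by omega)]
  simp

lemma hypTail_eq_sum (N K n d : ℤ) : hypTail N K n d = ∑ k ∈ Icc d n, hypPMF N K n k := by
  unfold hypTail
  rw [tsum_eq_sum (s := Icc d n) ?_]
  · apply Finset.sum_congr rfl
    intro k hk
    simp only [mem_Icc] at hk
    rw [if_pos hk.1]
  · intro k hk
    simp only [mem_Icc, not_and, not_le] at hk
    split_ifs with h
    · exact hypPMF_zero_of_gt N K n k (hk h)
    · rfl

lemma hypPMF_cast (N K n k : ℤ) (hN : 0 < N) (hK : 0 < K) (hKN : K ≤ N) (hn : 0 ≤ n)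
    (hk : 0 ≤ k) (hkn : k ≤ n) :
    hypPMF N K n k = ((K.toNat.choose k.toNat * (N.toNat - K.toNat).choose (n.toNat - k.toNat) : ℕ) : ℝ)
      / ((N.toNat.choose n.toNat : ℕ) : ℝ) := by
  unfold hypPMF
  rw [zchoose_eq K k (by omega) hk, zchoose_eq (N - K) (n - k) (by omega) (by omega),
    zchoose_eq N n (by omega) hn]
  have e1 : (N - K).toNat = N.toNat - K.toNat := by omega
  have e2 : (n - k).toNat = n.toNat - k.toNat := by omega
  rw [e1, e2]
  push_cast
  ring

lemma tail_le (N K n d : ℤ) (hn0 : 0 < n) (hK0 : 0 < K) (hKN : K < N) (hnN : n < N)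
    (hd1 : ((n : ℝ) * K / N) + 1 ≤ (d : ℝ)) (hd2 : d ≤ n) :
    hypTail N K n d ≤ Real.exp (-(n : ℝ) * klBer ((d : ℝ) / n) ((K : ℝ) / N)) := by
  have hN0 : 0 < N := by omega
  have hnr : (0:ℝ) < (n : ℝ) := by exact_mod_cast hn0
  have hNr : (0:ℝ) < (N : ℝ) := by exact_mod_cast hN0
  have hKr : (0:ℝ) < (K : ℝ) := by exact_mod_cast hK0
  obtain ⟨p, hp_def⟩ : ∃ p : ℝ, p = (K : ℝ) / N := ⟨_, rfl⟩
  obtain ⟨x, hx_def⟩ : ∃ x : ℝ, x = (d : ℝ) / n := ⟨_, rfl⟩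
  rw [← hp_def, ← hx_def]
  have hp0 : 0 < p := by rw [hp_def]; exact div_pos hKr hNr
  have hp1 : p < 1 := by rw [hp_def, div_lt_one hNr]; exact_mod_cast hKN
  have hd0 : 1 ≤ d := by
    have h1 : (0:ℝ) < (n : ℝ) * K / N := by positivity
    have : (1:ℝ) < (d : ℝ) := by linarith
    have h2 : (1:ℝ) ≤ (d:ℝ) := this.le
    exact_mod_cast h2
  have hpx : p < x := by
    rw [hp_def, hx_def, div_lt_div_iff₀ hNr hnr]
    have hd1' : (n : ℝ) * K / N + 1 ≤ d := hd1
    rw [div_add' _ _ _ (ne_of_gt hNr), div_le_iff₀ hNr] at hd1'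
    nlinarith
  have hx0 : 0 < x := hp0.trans hpx
  have hx1 : x ≤ 1 := by rw [hx_def, div_le_one hnr]; exact_mod_cast hd2
  have h1p0 : 0 < 1 - p := by linarith
  have cN : ((N.toNat : ℕ) : ℝ) = (N : ℝ) := by exact_mod_cast Int.toNat_of_nonneg hN0.le
  have cK : ((K.toNat : ℕ) : ℝ) = (K : ℝ) := by exact_mod_cast Int.toNat_of_nonneg hK0.le
  have cn : ((n.toNat : ℕ) : ℝ) = (n : ℝ) := by exact_mod_cast Int.toNat_of_nonneg hn0.le
  have cd : ((d.toNat : ℕ) : ℝ) = (d : ℝ) := by exact_mod_cast Int.toNat_of_nonneg (by omega : (0:ℤ) ≤ d)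
  have cm : (((n - d).toNat : ℕ) : ℝ) = (n : ℝ) - (d : ℝ) := by
    have h3 : (((n - d).toNat : ℕ) : ℝ) = ((n - d : ℤ) : ℝ) := by
      exact_mod_cast Int.toNat_of_nonneg (by omega : (0:ℤ) ≤ n - d)
    rw [h3]; push_cast; ring
  have hxn : x * (n : ℝ) = (d : ℝ) := by rw [hx_def]; field_simp
  have h1xn : (1 - x) * (n : ℝ) = (n : ℝ) - (d : ℝ) := by rw [hx_def]; field_simp
  have key : -(n : ℝ) * klBer x p
      = (d : ℝ) * Real.log (p / x) + ((n : ℝ) - (d : ℝ)) * Real.log ((1 - p) / (1 - x)) := by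
    unfold klBer
    rw [show x / p = (p / x)⁻¹ from (inv_div p x).symm, Real.log_inv,
      show (1 - x) / (1 - p) = ((1 - p) / (1 - x))⁻¹ from (inv_div _ _).symm, Real.log_inv]
    linear_combination Real.log (p / x) * hxn + Real.log ((1 - p) / (1 - x)) * h1xn
  have hRHS : Real.exp (-(n : ℝ) * klBer x p)
      = (p / x) ^ d.toNat * ((1 - p) / (1 - x)) ^ (n - d).toNat := by
    rw [key, Real.exp_add]
    congr 1
    · rw [← cd, Real.exp_nat_mul, Real.exp_log (div_pos hp0 hx0)]
    · rw [← cm, Real.exp_nat_mul]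
      by_cases hdn : d = n
      · rw [hdn]; simp
      · have hx1s : x < 1 := by
          rw [hx_def, div_lt_one hnr]; exact_mod_cast lt_of_le_of_ne hd2 hdn
        rw [Real.exp_log (div_pos h1p0 (by linarith))]
  rw [hRHS, hypTail_eq_sum]
  have hCNpos : (0:ℝ) < (N.toNat.choose n.toNat : ℝ) := by
    exact_mod_cast Nat.choose_pos (by omega : n.toNat ≤ N.toNat)
  by_cases hdn : d = n
  · -- boundary case d = n
    rw [show Finset.Icc d n = {n} by rw [hdn, Finset.Icc_self], Finset.sum_singleton,
      hypPMF_cast N K n n hN0 hK0 hKN.le hn0.le hn0.le le_rfl]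
    have hxx : x = 1 := by rw [hx_def, hdn, div_self (ne_of_gt hnr)]
    have hm0 : (n - d).toNat = 0 := by omega
    have hdd : d.toNat = n.toNat := by omega
    rw [hxx, hm0, hdd, pow_zero, mul_one, div_one]
    simp only [Nat.sub_self, Nat.choose_zero_right, mul_one]
    have h5 := choose_pow_le K.toNat N.toNat n.toNat (by omega)
    have h5' : (K.toNat.choose n.toNat : ℝ) * (N : ℝ) ^ n.toNat
        ≤ (N.toNat.choose n.toNat : ℝ) * (K : ℝ) ^ n.toNat := by
      rw [← cN, ← cK]; exact_mod_cast h5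
    rw [div_le_iff₀ hCNpos, hp_def, div_pow, div_mul_eq_mul_div, le_div_iff₀ (by positivity)]
    nlinarith [h5']
  · -- main case d < n
    have hx1s : x < 1 := by
      rw [hx_def, div_lt_one hnr]; exact_mod_cast lt_of_le_of_ne hd2 hdn
    have h1x0 : 0 < 1 - x := by linarith
    obtain ⟨t, ht_def⟩ : ∃ t : ℝ, t = x * (1 - p) / (p * (1 - x)) := ⟨_, rfl⟩
    have ht0 : 0 < t := by rw [ht_def]; exact div_pos (mul_pos hx0 h1p0) (mul_pos hp0 h1x0)
    have ht1 : 1 ≤ t := by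
      rw [ht_def, le_div_iff₀ (mul_pos hp0 h1x0)]; nlinarith
    have htp : 1 - p + p * t = (1 - p) / (1 - x) := by
      rw [ht_def]; field_simp; ring
    have htd : p / x * t = (1 - p) / (1 - x) := by
      rw [ht_def]; field_simp
    have s1 : ∑ k ∈ Icc d n, hypPMF N K n k
        ≤ ∑ k ∈ Icc d n, hypPMF N K n k * t ^ (k - d).toNat := by
      apply Finset.sum_le_sum
      intro k _
      exact le_mul_of_one_le_right (hypPMF_nonneg _ _ _ _) (one_le_pow₀ ht1)
    have s2 : (∑ k ∈ Icc d n, hypPMF N K n k * t ^ (k - d).toNat) * t ^ d.toNat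
        = ∑ k ∈ Icc d n, hypPMF N K n k * t ^ k.toNat := by
      rw [Finset.sum_mul]
      apply Finset.sum_congr rfl
      intro k hk
      simp only [mem_Icc] at hk
      rw [mul_assoc, ← pow_add]
      congr 2
      omega
    have s3 : ∑ k ∈ Icc d n, hypPMF N K n k * t ^ k.toNat
        ≤ ∑ k ∈ Icc (0:ℤ) n, hypPMF N K n k * t ^ k.toNat := by
      apply Finset.sum_le_sum_of_subset_of_nonneg (Finset.Icc_subset_Icc_left (by omega))
      intro k _ _
      exact mul_nonneg (hypPMF_nonneg _ _ _ _) (pow_nonneg ht0.le _)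
    have s4 : ∑ k ∈ Icc (0:ℤ) n, hypPMF N K n k * t ^ k.toNat
        = (∑ k' ∈ range (n.toNat + 1),
            ((K.toNat.choose k' * (N.toNat - K.toNat).choose (n.toNat - k') : ℕ) : ℝ) * t ^ k')
          / (N.toNat.choose n.toNat : ℝ) := by
      rw [Finset.sum_div]
      apply Finset.sum_nbij' (fun k : ℤ => k.toNat) (fun k' : ℕ => (k' : ℤ))
      · intro a ha; simp only [mem_Icc] at ha; simp only [mem_range]; omega
      · intro a ha; simp only [mem_range] at ha; simp only [mem_Icc]; omega
      · intro a ha; simp only [mem_Icc] at ha; omega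
      · intro a _; simp
      · intro a ha
        simp only [mem_Icc] at ha
        rw [hypPMF_cast N K n a hN0 hK0 hKN.le hn0.le ha.1 ha.2]
        rw [div_mul_eq_mul_div]
    have s5 : (∑ k' ∈ range (n.toNat + 1),
            ((K.toNat.choose k' * (N.toNat - K.toNat).choose (n.toNat - k') : ℕ) : ℝ) * t ^ k')
          / (N.toNat.choose n.toNat : ℝ)
        ≤ ((1 - p) / (1 - x)) ^ n.toNat := by
      rw [div_le_iff₀ hCNpos]
      have hch := chvatal N.toNat K.toNat n.toNat (by omega) (by omega) (by omega) t ht1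
      rw [cN, cK] at hch
      rw [← hp_def] at hch
      calc _ ≤ (N.toNat.choose n.toNat : ℝ) * (1 - p + p * t) ^ n.toNat := hch
        _ = ((1 - p) / (1 - x)) ^ n.toNat * (N.toNat.choose n.toNat : ℝ) := by rw [htp]; ring
    have s6 : (∑ k ∈ Icc d n, hypPMF N K n k) * t ^ d.toNat ≤ ((1 - p) / (1 - x)) ^ n.toNat := by
      calc (∑ k ∈ Icc d n, hypPMF N K n k) * t ^ d.toNat
          ≤ (∑ k ∈ Icc d n, hypPMF N K n k * t ^ (k - d).toNat) * t ^ d.toNat :=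
            mul_le_mul_of_nonneg_right s1 (pow_nonneg ht0.le _)
        _ = ∑ k ∈ Icc d n, hypPMF N K n k * t ^ k.toNat := s2
        _ ≤ ∑ k ∈ Icc (0:ℤ) n, hypPMF N K n k * t ^ k.toNat := s3
        _ = _ := s4
        _ ≤ ((1 - p) / (1 - x)) ^ n.toNat := s5
    have s7 : (p / x) ^ d.toNat * ((1 - p) / (1 - x)) ^ (n - d).toNat * t ^ d.toNat
        = ((1 - p) / (1 - x)) ^ n.toNat := by
      have hsplit : n.toNat = d.toNat + (n - d).toNat := by omega
      have h8 : (p / x) ^ d.toNat * t ^ d.toNat = ((1 - p) / (1 - x)) ^ d.toNat := by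
        rw [← mul_pow, htd]
      calc (p / x) ^ d.toNat * ((1 - p) / (1 - x)) ^ (n - d).toNat * t ^ d.toNat
          = ((p / x) ^ d.toNat * t ^ d.toNat) * ((1 - p) / (1 - x)) ^ (n - d).toNat := by ring
        _ = ((1 - p) / (1 - x)) ^ d.toNat * ((1 - p) / (1 - x)) ^ (n - d).toNat := by rw [h8]
        _ = ((1 - p) / (1 - x)) ^ n.toNat := by rw [← pow_add, ← hsplit]
    rw [← s7] at s6
    exact le_of_mul_le_mul_right s6 (pow_pos ht0 d.toNat)

lemma choose_id (N n K k : ℕ) (hkn : k ≤ n) (hkK : k ≤ K) (hn : n ≤ N) (hK : K ≤ N) :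
    ((K.choose k : ℕ) : ℝ) * (((N - K).choose (n - k) : ℕ) : ℝ) / ((N.choose n : ℕ) : ℝ)
      = ((n.choose k : ℕ) : ℝ) * (((N - n).choose (K - k) : ℕ) : ℝ) / ((N.choose K : ℕ) : ℝ) := by
  by_cases hc : K - k ≤ N - n
  · have hc' : n - k ≤ N - K := by omega
    have e1 : (N - n) - (K - k) = (N - K) - (n - k) := by omega
    rw [Nat.cast_choose ℝ hkK, Nat.cast_choose ℝ hc', Nat.cast_choose ℝ hn,
      Nat.cast_choose ℝ hkn, Nat.cast_choose ℝ hc, Nat.cast_choose ℝ hK, e1]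
    have hfac : ∀ m : ℕ, ((m.factorial : ℝ)) ≠ 0 := fun m => by exact_mod_cast m.factorial_ne_zero
    field_simp
  · push_neg at hc
    have hc' : N - K < n - k := by omega
    rw [Nat.choose_eq_zero_of_lt (by omega : N - K < n - k),
      Nat.choose_eq_zero_of_lt (by omega : N - n < K - k)]
    simp

lemma hypPMF_symm (N K n k : ℤ) (hn : 0 < n) (hK : 0 < K) (hnN : n < N) (hKN : K < N) :
    hypPMF N K n k = hypPMF N n K k := by
  unfold hypPMF
  by_cases h0 : 0 ≤ k
  · by_cases h1 : k ≤ n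
    · by_cases h2 : k ≤ K
      · rw [zchoose_eq K k hK.le h0, zchoose_eq (N - K) (n - k) (by omega) (by omega),
          zchoose_eq N n (by omega) hn.le, zchoose_eq n k hn.le h0,
          zchoose_eq (N - n) (K - k) (by omega) (by omega), zchoose_eq N K (by omega) hK.le]
        have e1 : (N - K).toNat = N.toNat - K.toNat := by omega
        have e2 : (n - k).toNat = n.toNat - k.toNat := by omega
        have e3 : (N - n).toNat = N.toNat - n.toNat := by omega
        have e4 : (K - k).toNat = K.toNat - k.toNat := by omega
        rw [e1, e2, e3, e4]
        push_cast
        exact choose_id N.toNat n.toNat K.toNat k.toNat (by omega) (by omega) (by omega) (by omega)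
      · rw [zchoose_zero_of_gt K k (by omega), zchoose_zero_of_neg (N - n) (K - k) (by omega)]
        simp
    · rw [zchoose_zero_of_neg (N - K) (n - k) (by omega), zchoose_zero_of_gt n k (by omega)]
      simp
  · rw [zchoose_zero_of_neg K k (by omega), zchoose_zero_of_neg n k (by omega)]
    simp

lemma hypTail_symm (N K n d : ℤ) (hn : 0 < n) (hK : 0 < K) (hnN : n < N) (hKN : K < N) :
    hypTail N K n d = hypTail N n K d := by
  unfold hypTail
  apply tsum_congr
  intro k
  split_ifs with h
  · exact hypPMF_symm N K n k hn hK hnN hKN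
  · rfl

theorem hypergeometric_min_chernoff (N K n : ℤ) (hn0 : 0 < n) (hnK : n ≤ K)
    (hKN : K < N) (d : ℤ) (hd1 : ((n : ℝ) * K / N) + 1 ≤ (d : ℝ)) (hd2 : d ≤ n) :
    hypTail N K n d ≤
      min (Real.exp (-(n : ℝ) * klBer ((d : ℝ) / n) ((K : ℝ) / N)))
        (Real.exp (-(K : ℝ) * klBer ((d : ℝ) / K) ((n : ℝ) / N))) := by
  refine le_min ?_ ?_
  · exact tail_le N K n d hn0 (by omega) hKN (by omega) hd1 hd2
  · rw [hypTail_symm N K n d hn0 (by omega) (by omega) hKN]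
    refine tail_le N n K d (by omega) hn0 (by omega) (by omega) ?_ (by omega)
    have h : (K : ℝ) * n / N = (n : ℝ) * K / N := by ring
    rw [h]
    exact hd1
end
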